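/- In a deterministic quadrilocal (square-network, independent sources) model for four parties A,B,C,D with hidden variables α (B–C), β (C–D), γ (D–A), δ (A–B), if the behaviour satisfies p(A_D = D_A) = 1 and p(C_D = D_C) = 1, then the conditional distribution p(a_B,b_A,b_C,c_B | a_D,c_D) admits a bilocal decomposition: p(a_B,b_A,b_C,c_B|a_D,c_D) = Σ_{α,δ} p(α)p(δ) p(a_B|a_D,δ) p(b_A,b_C|α,δ) p(c_B|c_D,α). -/

import Mathlib

/-!
Consistency with Daisy's deterministic output forces, on the support of the sources, Alice's
`a_D`-marginal given `(γ, δ)` to be the point mass at `(rd β γ).1` for every `β`; so `a_D` is a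
function of `γ` alone and its distribution given `δ` does not depend on `δ`. Symmetrically `c_D`
given `α` does not depend on `α`. Averaging out `γ` and `β` turns the square into a bilocal
network with sources `α`, `δ` in which Alice answers `(a_B, a_D)` and Charlie `(c_B, c_D)`;
there `p(a_D, c_D) = p(a_D) p(c_D)`, and dividing Alice's response `p(a_B, a_D | δ)` by `p(a_D)`
gives the kernel `p(a_B | a_D, δ)`, likewise for Charlie.
-/

open Finset

section FiniteDistributions

variable {X : Type*} [Fintype X]

theorem eq_one_of_sum_mul_eq_one {w f : X → ℝ} (hw0 : ∀ x, 0 ≤ w x) (hw1 : ∑ x, w x = 1)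
    (hf : ∀ x, f x ≤ 1) (h : ∑ x, w x * f x = 1) {x : X} (hx : 0 < w x) : f x = 1 := by
  have hdefect : ∑ x, w x * (1 - f x) = 0 := by
    simp only [mul_sub, mul_one, sum_sub_distrib, hw1, h, sub_self]
  have hx0 := (sum_eq_zero_iff_of_nonneg fun y _ => mul_nonneg (hw0 y) (sub_nonneg.2 (hf y))).1
    hdefect x (mem_univ x)
  linarith [(mul_eq_zero.1 hx0).resolve_left hx.ne']

theorem apply_eq_zero_of_apply_eq_one [DecidableEq X] {p : X → ℝ} (hp0 : ∀ x, 0 ≤ p x)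
    (hp1 : ∑ x, p x = 1) {x₀ : X} (hx₀ : p x₀ = 1) {x : X} (hx : x ≠ x₀) : p x = 0 := by
  have hrest : ∑ y ∈ univ.erase x₀, p y = 0 := by
    linarith [add_sum_erase univ p (mem_univ x₀)]
  exact (sum_eq_zero_iff_of_nonneg fun y _ => hp0 y).1 hrest x (mem_erase.2 ⟨hx, mem_univ x⟩)

theorem sum_apply_le_one {Y : Type*} [Fintype Y] {r : X → Y → ℝ} (h0 : ∀ x y, 0 ≤ r x y)
    (h1 : ∑ x, ∑ y, r x y = 1) (y₀ : Y) : ∑ x, r x y₀ ≤ 1 :=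
  (sum_le_sum fun x _ => single_le_sum (fun y _ => h0 x y) (mem_univ y₀)).trans h1.le

theorem sum_apply_eq_ite_of_sum_apply_eq_one {Y : Type*} [Fintype Y] [DecidableEq Y]
    {r : X → Y → ℝ} (h0 : ∀ x y, 0 ≤ r x y) (h1 : ∑ x, ∑ y, r x y = 1) {y₀ : Y}
    (hy₀ : ∑ x, r x y₀ = 1) (y : Y) :
    ∑ x, r x y = if y = y₀ then 1 else 0 := by
  split_ifs with hy
  · rwa [hy]
  · exact apply_eq_zero_of_apply_eq_one (p := fun y => ∑ x, r x y)
      (fun y => sum_nonneg fun x _ => h0 x y) (by rwa [sum_comm]) hy₀ hy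

theorem exists_pos_of_sum_eq_one {p : X → ℝ} (hp1 : ∑ x, p x = 1) : ∃ x, 0 < p x := by
  obtain ⟨x, -, hx⟩ := exists_lt_of_sum_lt (by simp [hp1] : ∑ _ : X, (0 : ℝ) < ∑ x, p x)
  exact ⟨x, hx⟩

theorem sum_mul_congr_of_pos {w f g : X → ℝ} (hw0 : ∀ x, 0 ≤ w x)
    (h : ∀ x, 0 < w x → f x = g x) : ∑ x, w x * f x = ∑ x, w x * g x := by
  refine sum_congr rfl fun x _ => ?_
  rcases (hw0 x).eq_or_lt with hx | hx
  · simp [← hx]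
  · rw [h x hx]

/-- The conditional distribution `q / ∑ q`; the uniform fallback only ever meets null events. -/
noncomputable def normalizeOrUniform (q : X → ℝ) (x : X) : ℝ :=
  if ∑ y, q y = 0 then (Fintype.card X : ℝ)⁻¹ else q x / ∑ y, q y

theorem normalizeOrUniform_nonneg {q : X → ℝ} (hq : ∀ x, 0 ≤ q x) (x : X) :
    0 ≤ normalizeOrUniform q x := by
  unfold normalizeOrUniform
  split_ifs
  · positivity
  · exact div_nonneg (hq x) (sum_nonneg fun y _ => hq y)

theorem sum_normalizeOrUniform [Nonempty X] (q : X → ℝ) : ∑ x, normalizeOrUniform q x = 1 := by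
  unfold normalizeOrUniform
  split_ifs with h
  · simp
  · rw [← sum_div, div_self h]

theorem normalizeOrUniform_of_sum_ne_zero {q : X → ℝ} (h : ∑ y, q y ≠ 0) (x : X) :
    normalizeOrUniform q x = q x / ∑ y, q y := if_neg h

end FiniteDistributions

theorem eq_one_of_indep_sum_mul_eq_one {A B G D : Type*} [Fintype A] [Fintype B] [Fintype G]
    [Fintype D] {pA : A → ℝ} {pB : B → ℝ} {pG : G → ℝ} {pD : D → ℝ}
    (hpA0 : ∀ α, 0 ≤ pA α) (hpA1 : ∑ α, pA α = 1) (hpB0 : ∀ β, 0 ≤ pB β) (hpB1 : ∑ β, pB β = 1)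
    (hpG0 : ∀ γ, 0 ≤ pG γ) (hpG1 : ∑ γ, pG γ = 1) (hpD0 : ∀ δ, 0 ≤ pD δ) (hpD1 : ∑ δ, pD δ = 1)
    {f : A → B → G → D → ℝ} (hf : ∀ α β γ δ, f α β γ δ ≤ 1)
    (h : ∑ α, ∑ β, ∑ γ, ∑ δ, pA α * pB β * pG γ * pD δ * f α β γ δ = 1)
    {α : A} {β : B} {γ : G} {δ : D} (hα : 0 < pA α) (hβ : 0 < pB β) (hγ : 0 < pG γ)
    (hδ : 0 < pD δ) : f α β γ δ = 1 := by
  let w : A × B × G × D → ℝ := fun x => pA x.1 * pB x.2.1 * pG x.2.2.1 * pD x.2.2.2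
  have hw1 : ∑ x, w x = 1 := by
    simp only [w, Fintype.sum_prod_type, ← mul_sum, hpA1, hpB1, hpG1, hpD1, mul_one]
  refine eq_one_of_sum_mul_eq_one (w := w) (f := fun x => f x.1 x.2.1 x.2.2.1 x.2.2.2)
    (fun x => mul_nonneg (mul_nonneg (mul_nonneg (hpA0 _) (hpB0 _)) (hpG0 _)) (hpD0 _)) hw1
    (fun x => hf _ _ _ _) ?_ (x := (α, β, γ, δ)) (by positivity)
  simpa only [w, Fintype.sum_prod_type] using h

section SquareNetwork

variable {A B G D O : Type*} [Fintype A] [Fintype B] [Fintype G] [Fintype D] [Fintype O]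

def squareBehaviour [DecidableEq O] (pA : A → ℝ) (pB : B → ℝ) (pG : G → ℝ) (pD : D → ℝ)
    (ra : G → D → O → O → ℝ) (rb : A → D → O → O → ℝ) (rc : A → B → O → O → ℝ)
    (rd : B → G → O × O) (aB aD bA bC cB cD dA dC : O) : ℝ :=
  ∑ α, ∑ β, ∑ γ, ∑ δ, pA α * pB β * pG γ * pD δ *
    ra γ δ aB aD * rb α δ bA bC * rc α β cB cD * (if rd β γ = (dA, dC) then 1 else 0)

/-- `aD` and `cD` are outputs of Alice and Charlie here; conditioning on them makes them the
inputs of the bilocal scenario. -/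
def bilocalBehaviour (pA : A → ℝ) (pD : D → ℝ) (QA : D → O → O → ℝ) (rb : A → D → O → O → ℝ)
    (QC : A → O → O → ℝ) (aB aD bA bC cB cD : O) : ℝ :=
  ∑ α, ∑ δ, pA α * pD δ * QA δ aB aD * rb α δ bA bC * QC α cB cD

section Marginals

variable (pA : A → ℝ) (pB : B → ℝ) (pG : G → ℝ) (pD : D → ℝ)
    (ra : G → D → O → O → ℝ) (rb : A → D → O → O → ℝ) (rc : A → B → O → O → ℝ)
    (rd : B → G → O × O)

theorem sum_sum_mul_squareBehaviour [DecidableEq O] (g : O → O → ℝ) (aB aD bA bC cB cD : O) :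
    ∑ dA, ∑ dC, g dA dC * squareBehaviour pA pB pG pD ra rb rc rd aB aD bA bC cB cD dA dC =
      ∑ α, ∑ β, ∑ γ, ∑ δ, pA α * pB β * pG γ * pD δ *
        ra γ δ aB aD * rb α δ bA bC * rc α β cB cD * g (rd β γ).1 (rd β γ).2 := by
  simp only [squareBehaviour, mul_sum, sum_comm (γ := O) (α := A), sum_comm (γ := O) (α := B),
    sum_comm (γ := O) (α := G), sum_comm (γ := O) (α := D)]
  refine sum_congr rfl fun α _ => sum_congr rfl fun β _ => sum_congr rfl fun γ _ =>
    sum_congr rfl fun δ _ => ?_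
  simp [Prod.ext_iff, ite_and, mul_comm]

theorem sum_ite_squareBehaviour_alice [DecidableEq O]
    (hrb1 : ∀ α δ, ∑ bA, ∑ bC, rb α δ bA bC = 1)
    (hrc1 : ∀ α β, ∑ cB, ∑ cD, rc α β cB cD = 1) :
    ∑ aB, ∑ aD, ∑ bA, ∑ bC, ∑ cB, ∑ cD, ∑ dA, ∑ dC,
      (if aD = dA then squareBehaviour pA pB pG pD ra rb rc rd aB aD bA bC cB cD dA dC else 0) =
      ∑ α, ∑ β, ∑ γ, ∑ δ, pA α * pB β * pG γ * pD δ * ∑ aB, ra γ δ aB (rd β γ).1 := by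
  simp only [← boole_mul (_ = _) (squareBehaviour _ _ _ _ _ _ _ _ _ _ _ _ _ _ _ _),
    sum_sum_mul_squareBehaviour, sum_comm (γ := O) (α := A), sum_comm (γ := O) (α := B),
    sum_comm (γ := O) (α := G), sum_comm (γ := O) (α := D)]
  refine sum_congr rfl fun α _ => sum_congr rfl fun β _ => sum_congr rfl fun γ _ =>
    sum_congr rfl fun δ _ => ?_
  simp only [← sum_mul, ← mul_sum, hrb1, hrc1]
  simp [mul_sum]

theorem sum_ite_squareBehaviour_charlie [DecidableEq O]
    (hra1 : ∀ γ δ, ∑ aB, ∑ aD, ra γ δ aB aD = 1)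
    (hrb1 : ∀ α δ, ∑ bA, ∑ bC, rb α δ bA bC = 1) :
    ∑ aB, ∑ aD, ∑ bA, ∑ bC, ∑ cB, ∑ cD, ∑ dA, ∑ dC,
      (if cD = dC then squareBehaviour pA pB pG pD ra rb rc rd aB aD bA bC cB cD dA dC else 0) =
      ∑ α, ∑ β, ∑ γ, ∑ δ, pA α * pB β * pG γ * pD δ * ∑ cB, rc α β cB (rd β γ).2 := by
  simp only [← boole_mul (_ = _) (squareBehaviour _ _ _ _ _ _ _ _ _ _ _ _ _ _ _ _),
    sum_sum_mul_squareBehaviour, sum_comm (γ := O) (α := A), sum_comm (γ := O) (α := B),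
    sum_comm (γ := O) (α := G), sum_comm (γ := O) (α := D)]
  refine sum_congr rfl fun α _ => sum_congr rfl fun β _ => sum_congr rfl fun γ _ =>
    sum_congr rfl fun δ _ => ?_
  simp [← sum_mul, ← mul_sum, hra1, hrb1]

theorem sum_sum_squareBehaviour [DecidableEq O] (aB aD bA bC cB cD : O) :
    ∑ dA, ∑ dC, squareBehaviour pA pB pG pD ra rb rc rd aB aD bA bC cB cD dA dC =
      bilocalBehaviour pA pD (fun δ aB aD => ∑ γ, pG γ * ra γ δ aB aD) rb
        (fun α cB cD => ∑ β, pB β * rc α β cB cD) aB aD bA bC cB cD := by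
  have h := sum_sum_mul_squareBehaviour pA pB pG pD ra rb rc rd (fun _ _ => 1) aB aD bA bC cB cD
  simp only [one_mul, mul_one] at h
  rw [h, bilocalBehaviour]
  simp only [mul_sum, sum_mul, sum_comm (γ := B) (α := D), sum_comm (γ := G) (α := D)]
  refine sum_congr rfl fun α _ => sum_congr rfl fun δ _ => sum_congr rfl fun β _ =>
    sum_congr rfl fun γ _ => ?_
  ring

theorem sum_bilocalBehaviour (QA : D → O → O → ℝ) (QC : A → O → O → ℝ)
    (hrb1 : ∀ α δ, ∑ bA, ∑ bC, rb α δ bA bC = 1) (aD cD : O) :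
    ∑ aB, ∑ bA, ∑ bC, ∑ cB, bilocalBehaviour pA pD QA rb QC aB aD bA bC cB cD =
      (∑ δ, pD δ * ∑ aB, QA δ aB aD) * ∑ α, pA α * ∑ cB, QC α cB cD := by
  simp only [bilocalBehaviour, sum_comm (γ := O) (α := A), sum_comm (γ := O) (α := D)]
  rw [sum_mul_sum, sum_comm]
  refine sum_congr rfl fun δ _ => sum_congr rfl fun α _ => ?_
  simp [← sum_mul, ← mul_sum, hrb1]
  ring

end Marginals

theorem alice_marginal_eq_of_consistent [DecidableEq O]
    {pA : A → ℝ} {pB : B → ℝ} {pG : G → ℝ} {pD : D → ℝ}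
    {ra : G → D → O → O → ℝ} {rb : A → D → O → O → ℝ} {rc : A → B → O → O → ℝ}
    {rd : B → G → O × O}
    (hpA0 : ∀ α, 0 ≤ pA α) (hpA1 : ∑ α, pA α = 1) (hpB0 : ∀ β, 0 ≤ pB β) (hpB1 : ∑ β, pB β = 1)
    (hpG0 : ∀ γ, 0 ≤ pG γ) (hpG1 : ∑ γ, pG γ = 1) (hpD0 : ∀ δ, 0 ≤ pD δ) (hpD1 : ∑ δ, pD δ = 1)
    (hra0 : ∀ γ δ aB aD, 0 ≤ ra γ δ aB aD) (hra1 : ∀ γ δ, ∑ aB, ∑ aD, ra γ δ aB aD = 1)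
    (hrb1 : ∀ α δ, ∑ bA, ∑ bC, rb α δ bA bC = 1) (hrc1 : ∀ α β, ∑ cB, ∑ cD, rc α β cB cD = 1)
    (hcons : ∑ aB, ∑ aD, ∑ bA, ∑ bC, ∑ cB, ∑ cD, ∑ dA, ∑ dC,
      (if aD = dA then squareBehaviour pA pB pG pD ra rb rc rd aB aD bA bC cB cD dA dC else 0) = 1)
    {δ δ' : D} (hδ : 0 < pD δ) (hδ' : 0 < pD δ') (aD : O) :
    ∑ aB, ∑ γ, pG γ * ra γ δ aB aD = ∑ aB, ∑ γ, pG γ * ra γ δ' aB aD := by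
  rw [sum_ite_squareBehaviour_alice pA pB pG pD ra rb rc rd hrb1 hrc1] at hcons
  obtain ⟨α₀, hα₀⟩ := exists_pos_of_sum_eq_one hpA1
  obtain ⟨β₀, hβ₀⟩ := exists_pos_of_sum_eq_one hpB1
  have hdet : ∀ γ δ, 0 < pG γ → 0 < pD δ → ∑ aB, ra γ δ aB (rd β₀ γ).1 = 1 :=
    fun γ δ hγ hδ => eq_one_of_indep_sum_mul_eq_one hpA0 hpA1 hpB0 hpB1 hpG0 hpG1 hpD0 hpD1
      (f := fun _ β γ δ => ∑ aB, ra γ δ aB (rd β γ).1)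
      (fun _ β γ δ => sum_apply_le_one (hra0 γ δ) (hra1 γ δ) _) hcons hα₀ hβ₀ hγ hδ
  have hmarg : ∀ δ, 0 < pD δ →
      ∑ aB, ∑ γ, pG γ * ra γ δ aB aD = ∑ γ, pG γ * if aD = (rd β₀ γ).1 then 1 else 0 := by
    intro δ hδ
    rw [sum_comm]
    simp only [← mul_sum]
    exact sum_mul_congr_of_pos hpG0 fun γ hγ => sum_apply_eq_ite_of_sum_apply_eq_one
      (hra0 γ δ) (hra1 γ δ) (hdet γ δ hγ hδ) aD
  rw [hmarg δ hδ, hmarg δ' hδ']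

theorem charlie_marginal_eq_of_consistent [DecidableEq O]
    {pA : A → ℝ} {pB : B → ℝ} {pG : G → ℝ} {pD : D → ℝ}
    {ra : G → D → O → O → ℝ} {rb : A → D → O → O → ℝ} {rc : A → B → O → O → ℝ}
    {rd : B → G → O × O}
    (hpA0 : ∀ α, 0 ≤ pA α) (hpA1 : ∑ α, pA α = 1) (hpB0 : ∀ β, 0 ≤ pB β) (hpB1 : ∑ β, pB β = 1)
    (hpG0 : ∀ γ, 0 ≤ pG γ) (hpG1 : ∑ γ, pG γ = 1) (hpD0 : ∀ δ, 0 ≤ pD δ) (hpD1 : ∑ δ, pD δ = 1)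
    (hra1 : ∀ γ δ, ∑ aB, ∑ aD, ra γ δ aB aD = 1) (hrb1 : ∀ α δ, ∑ bA, ∑ bC, rb α δ bA bC = 1)
    (hrc0 : ∀ α β cB cD, 0 ≤ rc α β cB cD) (hrc1 : ∀ α β, ∑ cB, ∑ cD, rc α β cB cD = 1)
    (hcons : ∑ aB, ∑ aD, ∑ bA, ∑ bC, ∑ cB, ∑ cD, ∑ dA, ∑ dC,
      (if cD = dC then squareBehaviour pA pB pG pD ra rb rc rd aB aD bA bC cB cD dA dC else 0) = 1)
    {α α' : A} (hα : 0 < pA α) (hα' : 0 < pA α') (cD : O) :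
    ∑ cB, ∑ β, pB β * rc α β cB cD = ∑ cB, ∑ β, pB β * rc α' β cB cD := by
  rw [sum_ite_squareBehaviour_charlie pA pB pG pD ra rb rc rd hra1 hrb1] at hcons
  obtain ⟨γ₀, hγ₀⟩ := exists_pos_of_sum_eq_one hpG1
  obtain ⟨δ₀, hδ₀⟩ := exists_pos_of_sum_eq_one hpD1
  have hdet : ∀ α β, 0 < pA α → 0 < pB β → ∑ cB, rc α β cB (rd β γ₀).2 = 1 :=
    fun α β hα hβ => eq_one_of_indep_sum_mul_eq_one hpA0 hpA1 hpB0 hpB1 hpG0 hpG1 hpD0 hpD1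
      (f := fun α β γ _ => ∑ cB, rc α β cB (rd β γ).2)
      (fun α β _ _ => sum_apply_le_one (hrc0 α β) (hrc1 α β) _) hcons hα hβ hγ₀ hδ₀
  have hmarg : ∀ α, 0 < pA α →
      ∑ cB, ∑ β, pB β * rc α β cB cD = ∑ β, pB β * if cD = (rd β γ₀).2 then 1 else 0 := by
    intro α hα
    rw [sum_comm]
    simp only [← mul_sum]
    exact sum_mul_congr_of_pos hpB0 fun β hβ => sum_apply_eq_ite_of_sum_apply_eq_one
      (hrc0 α β) (hrc1 α β) (hdet α β hα hβ) cD
  rw [hmarg α hα, hmarg α' hα']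

theorem exists_bilocal_decomposition_of_pos [Nonempty O] {pA : A → ℝ} {pD : D → ℝ}
    {QA : D → O → O → ℝ} {QC : A → O → O → ℝ} (rb : A → D → O → O → ℝ)
    (hpA0 : ∀ α, 0 ≤ pA α) (hpA1 : ∑ α, pA α = 1) (hpD0 : ∀ δ, 0 ≤ pD δ) (hpD1 : ∑ δ, pD δ = 1)
    (hQA0 : ∀ δ aB aD, 0 ≤ QA δ aB aD) (hQC0 : ∀ α cB cD, 0 ≤ QC α cB cD)
    (hA : ∀ δ δ', 0 < pD δ → 0 < pD δ' → ∀ aD, ∑ aB, QA δ aB aD = ∑ aB, QA δ' aB aD)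
    (hC : ∀ α α', 0 < pA α → 0 < pA α' → ∀ cD, ∑ cB, QC α cB cD = ∑ cB, QC α' cB cD) :
    ∃ F : O → O → D → ℝ, ∃ Hc : O → O → A → ℝ,
      (∀ aD δ, (∀ aB, 0 ≤ F aB aD δ) ∧ ∑ aB, F aB aD δ = 1) ∧
      (∀ cD α, (∀ cB, 0 ≤ Hc cB cD α) ∧ ∑ cB, Hc cB cD α = 1) ∧
      ∀ aB bA bC cB aD cD, 0 < ∑ δ, pD δ * ∑ aB, QA δ aB aD → 0 < ∑ α, pA α * ∑ cB, QC α cB cD →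
        bilocalBehaviour pA pD QA rb QC aB aD bA bC cB cD /
            ((∑ δ, pD δ * ∑ aB, QA δ aB aD) * ∑ α, pA α * ∑ cB, QC α cB cD) =
          ∑ α, ∑ δ, pA α * pD δ * F aB aD δ * rb α δ bA bC * Hc cB cD α := by
  have hMA : ∀ δ, 0 < pD δ → ∀ aD, ∑ aB, QA δ aB aD = ∑ δ', pD δ' * ∑ aB, QA δ' aB aD := by
    intro δ hδ aD
    rw [sum_mul_congr_of_pos hpD0 fun δ' hδ' => hA δ' δ hδ' hδ aD, ← sum_mul, hpD1, one_mul]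
  have hMC : ∀ α, 0 < pA α → ∀ cD, ∑ cB, QC α cB cD = ∑ α', pA α' * ∑ cB, QC α' cB cD := by
    intro α hα cD
    rw [sum_mul_congr_of_pos hpA0 fun α' hα' => hC α' α hα' hα cD, ← sum_mul, hpA1, one_mul]
  refine ⟨fun aB aD δ => normalizeOrUniform (fun aB => QA δ aB aD) aB,
    fun cB cD α => normalizeOrUniform (fun cB => QC α cB cD) cB,
    fun aD δ => ⟨normalizeOrUniform_nonneg (fun aB => hQA0 δ aB aD), sum_normalizeOrUniform _⟩,
    fun cD α => ⟨normalizeOrUniform_nonneg (fun cB => hQC0 α cB cD), sum_normalizeOrUniform _⟩,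
    fun aB bA bC cB aD cD hMAp hMCp => ?_⟩
  rw [bilocalBehaviour, sum_div]
  refine sum_congr rfl fun α _ => ?_
  rw [sum_div]
  refine sum_congr rfl fun δ _ => ?_
  rcases (hpA0 α).eq_or_lt with hα | hα
  · simp [← hα]
  rcases (hpD0 δ).eq_or_lt with hδ | hδ
  · simp [← hδ]
  dsimp only
  rw [normalizeOrUniform_of_sum_ne_zero (by rw [hMA δ hδ]; exact hMAp.ne'),
    normalizeOrUniform_of_sum_ne_zero (by rw [hMC α hα]; exact hMCp.ne'), hMA δ hδ, hMC α hα]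
  field_simp

theorem exists_bilocal_decomposition [Nonempty O] {pA : A → ℝ} {pD : D → ℝ}
    {QA : D → O → O → ℝ} {QC : A → O → O → ℝ} {rb : A → D → O → O → ℝ}
    (hpA0 : ∀ α, 0 ≤ pA α) (hpA1 : ∑ α, pA α = 1) (hpD0 : ∀ δ, 0 ≤ pD δ) (hpD1 : ∑ δ, pD δ = 1)
    (hQA0 : ∀ δ aB aD, 0 ≤ QA δ aB aD) (hQC0 : ∀ α cB cD, 0 ≤ QC α cB cD)
    (hrb1 : ∀ α δ, ∑ bA, ∑ bC, rb α δ bA bC = 1)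
    (hA : ∀ δ δ', 0 < pD δ → 0 < pD δ' → ∀ aD, ∑ aB, QA δ aB aD = ∑ aB, QA δ' aB aD)
    (hC : ∀ α α', 0 < pA α → 0 < pA α' → ∀ cD, ∑ cB, QC α cB cD = ∑ cB, QC α' cB cD) :
    ∃ F : O → O → D → ℝ, ∃ Hc : O → O → A → ℝ,
      (∀ aD δ, (∀ aB, 0 ≤ F aB aD δ) ∧ ∑ aB, F aB aD δ = 1) ∧
      (∀ cD α, (∀ cB, 0 ≤ Hc cB cD α) ∧ ∑ cB, Hc cB cD α = 1) ∧
      ∀ aB bA bC cB aD cD,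
        0 < ∑ cD', ∑ aB', ∑ bA', ∑ bC', ∑ cB',
          bilocalBehaviour pA pD QA rb QC aB' aD bA' bC' cB' cD' →
        0 < ∑ aD', ∑ aB', ∑ bA', ∑ bC', ∑ cB',
          bilocalBehaviour pA pD QA rb QC aB' aD' bA' bC' cB' cD →
        bilocalBehaviour pA pD QA rb QC aB aD bA bC cB cD /
            ∑ aB', ∑ bA', ∑ bC', ∑ cB', bilocalBehaviour pA pD QA rb QC aB' aD bA' bC' cB' cD =
          ∑ α, ∑ δ, pA α * pD δ * F aB aD δ * rb α δ bA bC * Hc cB cD α := by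
  obtain ⟨F, Hc, hF, hHc, hdec⟩ :=
    exists_bilocal_decomposition_of_pos rb hpA0 hpA1 hpD0 hpD1 hQA0 hQC0 hA hC
  refine ⟨F, Hc, hF, hHc, fun aB bA bC cB aD cD hAD hCD => ?_⟩
  simp only [sum_bilocalBehaviour pA pD rb QA QC hrb1, ← mul_sum, ← sum_mul] at hAD hCD
  rw [sum_bilocalBehaviour pA pD rb QA QC hrb1]
  have hMA0 : ∀ aD, 0 ≤ ∑ δ, pD δ * ∑ aB, QA δ aB aD :=
    fun aD => sum_nonneg fun δ _ => mul_nonneg (hpD0 δ) (sum_nonneg fun aB _ => hQA0 δ aB aD)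
  have hMC0 : ∀ cD, 0 ≤ ∑ α, pA α * ∑ cB, QC α cB cD :=
    fun cD => sum_nonneg fun α _ => mul_nonneg (hpA0 α) (sum_nonneg fun cB _ => hQC0 α cB cD)
  exact hdec aB bA bC cB aD cD (pos_of_mul_pos_left hAD (sum_nonneg fun cD _ => hMC0 cD))
    (pos_of_mul_pos_right hCD (sum_nonneg fun aD _ => hMA0 aD))

end SquareNetwork

theorem square_network_bilocal_decomposition_general
    {A B G D : Type*} [Fintype A] [Fintype B] [Fintype G] [Fintype D]
    (pA : A → ℝ) (pB : B → ℝ) (pG : G → ℝ) (pD : D → ℝ)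
    (hpA0 : ∀ α, 0 ≤ pA α) (hpA1 : ∑ α, pA α = 1)
    (hpB0 : ∀ β, 0 ≤ pB β) (hpB1 : ∑ β, pB β = 1)
    (hpG0 : ∀ γ, 0 ≤ pG γ) (hpG1 : ∑ γ, pG γ = 1)
    (hpD0 : ∀ δ, 0 ≤ pD δ) (hpD1 : ∑ δ, pD δ = 1)
    -- response kernels: Alice (a_B,a_D) from (γ,δ), Bob (b_A,b_C) from (α,δ),
    -- Charlie (c_B,c_D) from (α,β), Daisy (d_A,d_C) deterministic from (β,γ)
    (ra : G → D → Fin 2 → Fin 2 → ℝ) (rb : A → D → Fin 2 → Fin 2 → ℝ)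
    (rc : A → B → Fin 2 → Fin 2 → ℝ) (rd : B → G → Fin 2 × Fin 2)
    (hra0 : ∀ γ δ aB aD, 0 ≤ ra γ δ aB aD) (hra1 : ∀ γ δ, ∑ aB, ∑ aD, ra γ δ aB aD = 1)
    (hrb1 : ∀ α δ, ∑ bA, ∑ bC, rb α δ bA bC = 1)
    (hrc0 : ∀ α β cB cD, 0 ≤ rc α β cB cD) (hrc1 : ∀ α β, ∑ cB, ∑ cD, rc α β cB cD = 1)
    -- the full behaviour on the eight output bits
    (P : Fin 2 → Fin 2 → Fin 2 → Fin 2 → Fin 2 → Fin 2 → Fin 2 → Fin 2 → ℝ)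
    (hP : ∀ aB aD bA bC cB cD dA dC, P aB aD bA bC cB cD dA dC =
      ∑ α, ∑ β, ∑ γ, ∑ δ, pA α * pB β * pG γ * pD δ *
        ra γ δ aB aD * rb α δ bA bC * rc α β cB cD *
        (if rd β γ = (dA, dC) then 1 else 0))
    -- consistency conditions p(A_D = D_A) = 1 and p(C_D = D_C) = 1
    (hconsA : ∑ aB, ∑ aD, ∑ bA, ∑ bC, ∑ cB, ∑ cD, ∑ dA, ∑ dC,
      (if aD = dA then P aB aD bA bC cB cD dA dC else 0) = 1)
    (hconsC : ∑ aB, ∑ aD, ∑ bA, ∑ bC, ∑ cB, ∑ cD, ∑ dA, ∑ dC,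
      (if cD = dC then P aB aD bA bC cB cD dA dC else 0) = 1)
    -- marginals
    (P6 : Fin 2 → Fin 2 → Fin 2 → Fin 2 → Fin 2 → Fin 2 → ℝ)
    (hP6 : ∀ aB aD bA bC cB cD, P6 aB aD bA bC cB cD =
      ∑ dA, ∑ dC, P aB aD bA bC cB cD dA dC)
    (pADCD : Fin 2 → Fin 2 → ℝ)
    (hpADCD : ∀ aD cD, pADCD aD cD = ∑ aB, ∑ bA, ∑ bC, ∑ cB, P6 aB aD bA bC cB cD)
    (pAD pCD : Fin 2 → ℝ)
    (hpAD : ∀ aD, pAD aD = ∑ cD, pADCD aD cD)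
    (hpCD : ∀ cD, pCD cD = ∑ aD, pADCD aD cD) :
    ∃ F : Fin 2 → Fin 2 → D → ℝ, ∃ Hc : Fin 2 → Fin 2 → A → ℝ,
      (∀ aD δ, (∀ aB, 0 ≤ F aB aD δ) ∧ ∑ aB, F aB aD δ = 1) ∧
      (∀ cD α, (∀ cB, 0 ≤ Hc cB cD α) ∧ ∑ cB, Hc cB cD α = 1) ∧
      ∀ aB bA bC cB aD cD, 0 < pAD aD → 0 < pCD cD →
        P6 aB aD bA bC cB cD / pADCD aD cD =
          ∑ α, ∑ δ, pA α * pD δ * F aB aD δ * rb α δ bA bC * Hc cB cD α := by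
  obtain rfl : P = squareBehaviour pA pB pG pD ra rb rc rd := by
    funext aB aD bA bC cB cD dA dC
    exact hP aB aD bA bC cB cD dA dC
  set QA : D → Fin 2 → Fin 2 → ℝ := fun δ aB aD => ∑ γ, pG γ * ra γ δ aB aD
  set QC : A → Fin 2 → Fin 2 → ℝ := fun α cB cD => ∑ β, pB β * rc α β cB cD
  have hP6' : ∀ aB aD bA bC cB cD, P6 aB aD bA bC cB cD =
      bilocalBehaviour pA pD QA rb QC aB aD bA bC cB cD :=
    fun aB aD bA bC cB cD => (hP6 aB aD bA bC cB cD).trans (sum_sum_squareBehaviour ..)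
  obtain ⟨F, Hc, hF, hHc, hdec⟩ := exists_bilocal_decomposition hpA0 hpA1 hpD0 hpD1
    (fun δ aB aD => sum_nonneg fun γ _ => mul_nonneg (hpG0 γ) (hra0 γ δ aB aD))
    (fun α cB cD => sum_nonneg fun β _ => mul_nonneg (hpB0 β) (hrc0 α β cB cD)) hrb1
    (fun δ δ' => alice_marginal_eq_of_consistent hpA0 hpA1 hpB0 hpB1 hpG0 hpG1 hpD0 hpD1 hra0
      hra1 hrb1 hrc1 hconsA)
    (fun α α' => charlie_marginal_eq_of_consistent hpA0 hpA1 hpB0 hpB1 hpG0 hpG1 hpD0 hpD1 hra1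
      hrb1 hrc0 hrc1 hconsC)
  refine ⟨F, Hc, hF, hHc, fun aB bA bC cB aD cD hAD hCD => ?_⟩
  simp only [hpAD, hpCD, hpADCD, hP6'] at hAD hCD ⊢
  exact hdec aB bA bC cB aD cD hAD hCD

/-- In a deterministic quadrilocal model for the square network without inputs, if
`p(A_D = D_A) = 1` and `p(C_D = D_C) = 1`, then the conditional behaviour
`p(a_B,b_A,b_C,c_B | a_D,c_D)` admits a bilocal decomposition
`Σ_{α,δ} p(α)p(δ) p(a_B|a_D,δ) p(b_A,b_C|α,δ) p(c_B|c_D,α)`.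
Hidden variables: `α` (B–C), `β` (C–D), `γ` (D–A), `δ` (A–B); Daisy's response is
deterministic. -/
theorem square_network_bilocal_decomposition
    {A B G D : Type*} [Fintype A] [Fintype B] [Fintype G] [Fintype D]
    (pA : A → ℝ) (pB : B → ℝ) (pG : G → ℝ) (pD : D → ℝ)
    (hpA0 : ∀ α, 0 ≤ pA α) (hpA1 : ∑ α, pA α = 1)
    (hpB0 : ∀ β, 0 ≤ pB β) (hpB1 : ∑ β, pB β = 1)
    (hpG0 : ∀ γ, 0 ≤ pG γ) (hpG1 : ∑ γ, pG γ = 1)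
    (hpD0 : ∀ δ, 0 ≤ pD δ) (hpD1 : ∑ δ, pD δ = 1)
    -- response kernels: Alice (a_B,a_D) from (γ,δ), Bob (b_A,b_C) from (α,δ),
    -- Charlie (c_B,c_D) from (α,β), Daisy (d_A,d_C) deterministic from (β,γ)
    (ra : G → D → Fin 2 → Fin 2 → ℝ) (rb : A → D → Fin 2 → Fin 2 → ℝ)
    (rc : A → B → Fin 2 → Fin 2 → ℝ) (rd : B → G → Fin 2 × Fin 2)
    (hra0 : ∀ γ δ aB aD, 0 ≤ ra γ δ aB aD) (hra1 : ∀ γ δ, ∑ aB, ∑ aD, ra γ δ aB aD = 1)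
    (hrb0 : ∀ α δ bA bC, 0 ≤ rb α δ bA bC) (hrb1 : ∀ α δ, ∑ bA, ∑ bC, rb α δ bA bC = 1)
    (hrc0 : ∀ α β cB cD, 0 ≤ rc α β cB cD) (hrc1 : ∀ α β, ∑ cB, ∑ cD, rc α β cB cD = 1)
    -- the full behaviour on the eight output bits
    (P : Fin 2 → Fin 2 → Fin 2 → Fin 2 → Fin 2 → Fin 2 → Fin 2 → Fin 2 → ℝ)
    (hP : ∀ aB aD bA bC cB cD dA dC, P aB aD bA bC cB cD dA dC =
      ∑ α, ∑ β, ∑ γ, ∑ δ, pA α * pB β * pG γ * pD δ *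
        ra γ δ aB aD * rb α δ bA bC * rc α β cB cD *
        (if rd β γ = (dA, dC) then 1 else 0))
    -- consistency conditions p(A_D = D_A) = 1 and p(C_D = D_C) = 1
    (hconsA : ∑ aB, ∑ aD, ∑ bA, ∑ bC, ∑ cB, ∑ cD, ∑ dA, ∑ dC,
      (if aD = dA then P aB aD bA bC cB cD dA dC else 0) = 1)
    (hconsC : ∑ aB, ∑ aD, ∑ bA, ∑ bC, ∑ cB, ∑ cD, ∑ dA, ∑ dC,
      (if cD = dC then P aB aD bA bC cB cD dA dC else 0) = 1)
    -- marginals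
    (P6 : Fin 2 → Fin 2 → Fin 2 → Fin 2 → Fin 2 → Fin 2 → ℝ)
    (hP6 : ∀ aB aD bA bC cB cD, P6 aB aD bA bC cB cD =
      ∑ dA, ∑ dC, P aB aD bA bC cB cD dA dC)
    (pADCD : Fin 2 → Fin 2 → ℝ)
    (hpADCD : ∀ aD cD, pADCD aD cD = ∑ aB, ∑ bA, ∑ bC, ∑ cB, P6 aB aD bA bC cB cD)
    (pAD pCD : Fin 2 → ℝ)
    (hpAD : ∀ aD, pAD aD = ∑ cD, pADCD aD cD)
    (hpCD : ∀ cD, pCD cD = ∑ aD, pADCD aD cD) :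
    ∃ F : Fin 2 → Fin 2 → D → ℝ, ∃ Hc : Fin 2 → Fin 2 → A → ℝ,
      (∀ aD δ, (∀ aB, 0 ≤ F aB aD δ) ∧ ∑ aB, F aB aD δ = 1) ∧
      (∀ cD α, (∀ cB, 0 ≤ Hc cB cD α) ∧ ∑ cB, Hc cB cD α = 1) ∧
      ∀ aB bA bC cB aD cD, 0 < pAD aD → 0 < pCD cD →
        P6 aB aD bA bC cB cD / pADCD aD cD =
          ∑ α, ∑ δ, pA α * pD δ * F aB aD δ * rb α δ bA bC * Hc cB cD α :=
  square_network_bilocal_decomposition_general pA pB pG pD hpA0 hpA1 hpB0 hpB1 hpG0 hpG1 hpD0 hpD1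
    ra rb rc rd hra0 hra1 hrb1 hrc0 hrc1 P hP hconsA hconsC P6 hP6 pADCD hpADCD pAD pCD hpAD hpCD
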